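/- arXiv:1509.08519 — 4 statements merged into one kernel-verified Lean document; each statement's English description precedes it below -/
import Mathlib

section
/- For every positive random variable X on a probability space such that all moments exist, the function s ↦ λ_s(X) is log-convex: for all real s and t, λ_s · λ_t − (λ_{(s+t)/2})² ≥ 0. -/
/-
With `φ_s(x) = x^s / (s(s-1))` (and `-log x`, `x log x` for `s = 0, 1`) one has `φ_s''(u) = u^(s-2)`
and `λ_s = E[φ_s(X)] - φ_s(E X)`, the Jensen gap of `φ_s`. Taylor's formula with integral remainder
around `m = E X` turns it into `λ_s = ∫∫ K(ω, u) u^(s-2) du dμ(ω)`, where the kernel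
`K(ω, u) = |X ω - u|` for `u` between `m` and `X ω` (and `0` otherwise) does not depend on `s`.
So `s ↦ λ_s` is an integral of exponentials `u^(s-2) = exp((s-2) log u)` against one positive
measure, and the Cauchy–Schwarz inequality gives `λ_((s+t)/2)^2 ≤ λ_s λ_t`.
-/

open MeasureTheory Set
open scoped ENNReal Interval

/-- The moment difference `λ_s(X)` of a positive random variable `X`. -/
noncomputable def momentLambda {Ω : Type*} [MeasurableSpace Ω] (μ : Measure Ω) (X : Ω → ℝ)
    (s : ℝ) : ℝ :=
  if s = 0 then Real.log (∫ ω, X ω ∂μ) - ∫ ω, Real.log (X ω) ∂μ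
  else if s = 1 then (∫ ω, X ω * Real.log (X ω) ∂μ) - (∫ ω, X ω ∂μ) * Real.log (∫ ω, X ω ∂μ)
  else ((∫ ω, X ω ^ s ∂μ) - (∫ ω, X ω ∂μ) ^ s) / (s * (s - 1))

theorem ENNReal.lintegral_mul_rpow_midpoint_sq_le {α : Type*} [MeasurableSpace α]
    {ν : Measure α} {w g : α → ℝ≥0∞} (hw : AEMeasurable w ν) (hg : AEMeasurable g ν)
    (hg0 : ∀ x, w x ≠ 0 → g x ≠ 0) (hgtop : ∀ x, g x ≠ ∞) (s t : ℝ) :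
    (∫⁻ x, w x * g x ^ ((s + t) / 2) ∂ν) ^ 2 ≤
      (∫⁻ x, w x * g x ^ s ∂ν) * ∫⁻ x, w x * g x ^ t ∂ν := by
  have hsplit : ∀ x, w x * g x ^ ((s + t) / 2) =
      (w x * g x ^ s) ^ (2⁻¹ : ℝ) * (w x * g x ^ t) ^ (2⁻¹ : ℝ) := by
    intro x
    rcases eq_or_ne (w x) 0 with hw0 | hw0
    · simp [hw0]
    rw [ENNReal.mul_rpow_of_nonneg _ _ (by norm_num), ENNReal.mul_rpow_of_nonneg _ _ (by norm_num),
      mul_mul_mul_comm, ← ENNReal.rpow_add_of_nonneg _ _ (by norm_num) (by norm_num),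
      ← ENNReal.rpow_mul, ← ENNReal.rpow_mul, ← ENNReal.rpow_add _ _ (hg0 x hw0) (hgtop x)]
    norm_num
    ring_nf
  have holder := (lintegral_congr hsplit).trans_le <| ENNReal.lintegral_mul_norm_pow_le
    (hw.mul (hg.pow_const s)) (hw.mul (hg.pow_const t)) (by norm_num) (by norm_num) (by norm_num)
  calc _ ≤ ((∫⁻ x, w x * g x ^ s ∂ν) ^ (2⁻¹ : ℝ) * (∫⁻ x, w x * g x ^ t ∂ν) ^ (2⁻¹ : ℝ)) ^ 2 := by
        gcongr; exact holder
    _ = _ := by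
      rw [mul_pow, ← ENNReal.rpow_two, ← ENNReal.rpow_two, ← ENNReal.rpow_mul, ← ENNReal.rpow_mul]
      norm_num

theorem integral_pos_of_forall_pos {α : Type*} [MeasurableSpace α] {μ : Measure α} [NeZero μ]
    {f : α → ℝ} (hf : ∀ x, 0 < f x) (hfi : Integrable f μ) : 0 < ∫ x, f x ∂μ := by
  rw [integral_pos_iff_support_of_nonneg (fun x => (hf x).le) hfi,
    Function.support_eq_univ fun x => (hf x).ne']
  exact NeZero.pos _

theorem Set.uIcc_subset_Ioi {a b c : ℝ} (ha : c < a) (hb : c < b) : uIcc a b ⊆ Ioi c :=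
  fun _ hu => (lt_min ha hb).trans_le hu.1

theorem intervalIntegral.integral_sub_mul_eq_taylor_remainder {φ φ' φ'' : ℝ → ℝ} {a b : ℝ}
    (hφ : ∀ u ∈ uIcc a b, HasDerivAt φ (φ' u) u)
    (hφ' : ∀ u ∈ uIcc a b, HasDerivAt φ' (φ'' u) u)
    (hφ'' : IntervalIntegrable φ'' volume a b) :
    ∫ u in a..b, (b - u) * φ'' u = φ b - φ a - φ' a * (b - a) := by
  have hG : ∀ u ∈ uIcc a b,
      HasDerivAt (fun u => φ u + φ' u * (b - u)) ((b - u) * φ'' u) u := fun u hu => by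
    refine ((hφ u hu).add ((hφ' u hu).mul ((hasDerivAt_id' u).const_sub b))).congr_deriv ?_
    ring
  rw [intervalIntegral.integral_eq_sub_of_hasDerivAt hG
    (hφ''.continuousOn_mul (by fun_prop))]
  ring

noncomputable def powPotential (s x : ℝ) : ℝ :=
  if s = 0 then -Real.log x else if s = 1 then x * Real.log x else x ^ s / (s * (s - 1))

noncomputable def powPotentialDeriv (s x : ℝ) : ℝ :=
  if s = 0 then -x⁻¹ else if s = 1 then Real.log x + 1 else x ^ (s - 1) / (s - 1)

theorem hasDerivAt_powPotential (s : ℝ) {x : ℝ} (hx : 0 < x) :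
    HasDerivAt (powPotential s) (powPotentialDeriv s x) x := by
  unfold powPotential powPotentialDeriv
  split_ifs with h0 h1
  · exact (Real.hasDerivAt_log hx.ne').neg
  · exact Real.hasDerivAt_mul_log hx.ne'
  · refine ((Real.hasDerivAt_rpow_const (Or.inl hx.ne')).div_const _).congr_deriv ?_
    field_simp [sub_ne_zero.2 h1]

theorem hasDerivAt_powPotentialDeriv (s : ℝ) {x : ℝ} (hx : 0 < x) :
    HasDerivAt (powPotentialDeriv s) (x ^ (s - 2)) x := by
  unfold powPotentialDeriv
  split_ifs with h0 h1
  · subst h0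
    refine (hasDerivAt_inv hx.ne').neg.congr_deriv ?_
    rw [zero_sub, Real.rpow_neg hx.le, neg_neg, Real.rpow_two]
  · subst h1
    refine ((Real.hasDerivAt_log hx.ne').add_const 1).congr_deriv ?_
    norm_num [Real.rpow_neg_one]
  · refine ((Real.hasDerivAt_rpow_const (Or.inl hx.ne')).div_const _).congr_deriv ?_
    rw [sub_sub, one_add_one_eq_two]
    field_simp [sub_ne_zero.2 h1]

noncomputable def taylorKernel (m x u : ℝ) : ℝ≥0∞ :=
  (Ι m x).indicator (fun u => ENNReal.ofReal |x - u|) u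

theorem Measurable.taylorKernel {α : Type*} [MeasurableSpace α] {f g h : α → ℝ}
    (hf : Measurable f) (hg : Measurable g) (hh : Measurable h) :
    Measurable fun a => taylorKernel (f a) (g a) (h a) := by
  simp only [_root_.taylorKernel, indicator_apply, uIoc, mem_Ioc]
  exact Measurable.ite ((measurableSet_lt (hf.min hg) hh).inter (measurableSet_le hh (hf.max hg)))
    (hg.sub hh).abs.ennreal_ofReal measurable_const

theorem pos_of_taylorKernel_ne_zero {m x u : ℝ} (hm : 0 < m) (hx : 0 < x)
    (hu : taylorKernel m x u ≠ 0) : 0 < u :=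
  uIcc_subset_Ioi hm hx (uIoc_subset_uIcc (mem_of_indicator_ne_zero hu))

noncomputable def powBregman (s m x : ℝ) : ℝ :=
  powPotential s x - powPotential s m - powPotentialDeriv s m * (x - m)

section powBregman

variable (s : ℝ) {m x : ℝ}

theorem powBregman_eq_intervalIntegral (hm : 0 < m) (hx : 0 < x) :
    powBregman s m x = ∫ u in m..x, (x - u) * u ^ (s - 2) := by
  have hpos := uIcc_subset_Ioi hm hx
  refine (intervalIntegral.integral_sub_mul_eq_taylor_remainder
    (fun u hu => hasDerivAt_powPotential s (hpos hu))
    (fun u hu => hasDerivAt_powPotentialDeriv s (hpos hu)) ?_).symm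
  exact ContinuousOn.intervalIntegrable fun u hu =>
    (Real.continuousAt_rpow_const u _ (Or.inl (hpos hu).ne')).continuousWithinAt

theorem powBregman_eq_setIntegral (hm : 0 < m) (hx : 0 < x) :
    powBregman s m x = ∫ u in Ι m x, |x - u| * u ^ (s - 2) := by
  rw [powBregman_eq_intervalIntegral s hm hx]
  rcases le_total m x with h | h
  · rw [intervalIntegral.integral_of_le h, uIoc_of_le h]
    refine setIntegral_congr_fun measurableSet_Ioc fun u hu => ?_
    rw [abs_of_nonneg (sub_nonneg.2 hu.2)]
  · rw [intervalIntegral.integral_symm, intervalIntegral.integral_of_le h, uIoc_of_ge h,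
      ← integral_neg]
    refine setIntegral_congr_fun measurableSet_Ioc fun u hu => ?_
    rw [abs_of_nonpos (sub_nonpos.2 hu.1.le), neg_mul]

theorem ofReal_powBregman (hm : 0 < m) (hx : 0 < x) :
    ENNReal.ofReal (powBregman s m x) =
      ∫⁻ u, taylorKernel m x u * ENNReal.ofReal u ^ (s - 2) := by
  unfold taylorKernel
  have hpos : ∀ u ∈ Ι m x, 0 < u := fun u hu =>
    uIcc_subset_Ioi hm hx (uIoc_subset_uIcc hu)
  have hcont : ContinuousOn (fun u => |x - u| * u ^ (s - 2)) (uIcc m x) := fun u hu =>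
    (continuous_const.sub continuous_id).abs.continuousAt.mul
      (Real.continuousAt_rpow_const u _ (Or.inl (uIcc_subset_Ioi hm hx hu).ne'))
      |>.continuousWithinAt
  rw [powBregman_eq_setIntegral s hm hx, ofReal_integral_eq_lintegral_ofReal
    ((hcont.integrableOn_compact isCompact_uIcc).mono_set uIoc_subset_uIcc)
    ((ae_restrict_iff' measurableSet_uIoc).2 (.of_forall fun u hu =>
      mul_nonneg (abs_nonneg _) (Real.rpow_nonneg (hpos u hu).le _))),
    ← lintegral_indicator measurableSet_uIoc]
  refine lintegral_congr fun u => ?_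
  by_cases hu : u ∈ Ι m x
  · rw [indicator_of_mem hu, indicator_of_mem hu, ENNReal.ofReal_mul (abs_nonneg _),
      ENNReal.ofReal_rpow_of_pos (hpos u hu)]
  · rw [indicator_of_notMem hu, indicator_of_notMem hu, zero_mul]

theorem powBregman_nonneg (hm : 0 < m) (hx : 0 < x) : 0 ≤ powBregman s m x := by
  rw [powBregman_eq_setIntegral s hm hx]
  exact setIntegral_nonneg measurableSet_uIoc fun u hu =>
    mul_nonneg (abs_nonneg _) (Real.rpow_nonneg (uIcc_subset_Ioi hm hx (uIoc_subset_uIcc hu)).le _)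

end powBregman

section momentLambda

variable {Ω : Type*} [MeasurableSpace Ω] {μ : Measure Ω} {X : Ω → ℝ}

theorem momentLambda_congr_ae {Y : Ω → ℝ} (h : X =ᵐ[μ] Y) (s : ℝ) :
    momentLambda μ X s = momentLambda μ Y s := by
  have congr_comp (f : ℝ → ℝ) : ∫ ω, f (X ω) ∂μ = ∫ ω, f (Y ω) ∂μ :=
    integral_congr_ae (h.fun_comp f)
  unfold momentLambda
  rw [integral_congr_ae h, congr_comp Real.log, congr_comp (fun x => x * Real.log x),
    congr_comp (· ^ s)]

theorem momentLambda_eq_integral_sub (s : ℝ) :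
    momentLambda μ X s = ∫ ω, powPotential s (X ω) ∂μ - powPotential s (∫ ω, X ω ∂μ) := by
  unfold momentLambda powPotential
  split_ifs
  · rw [integral_neg]; ring
  · rfl
  · rw [integral_div, sub_div]

theorem integrable_powPotential_comp (hmom : ∀ s : ℝ, Integrable (fun ω => X ω ^ s) μ)
    (hlog : Integrable (fun ω => Real.log (X ω)) μ)
    (hxlog : Integrable (fun ω => X ω * Real.log (X ω)) μ) (s : ℝ) :
    Integrable (fun ω => powPotential s (X ω)) μ := by
  unfold powPotential
  split_ifs
  exacts [hlog.neg, hxlog, (hmom s).div_const _]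

variable [IsProbabilityMeasure μ] {s : ℝ}

theorem momentLambda_eq_integral_powBregman (hint : Integrable X μ)
    (hφ : Integrable (fun ω => powPotential s (X ω)) μ) :
    momentLambda μ X s = ∫ ω, powBregman s (∫ ω, X ω ∂μ) (X ω) ∂μ := by
  set m := ∫ ω, X ω ∂μ
  have hφm : Integrable (fun ω => powPotential s (X ω) - powPotential s m) μ :=
    hφ.sub (integrable_const _)
  have hXm : Integrable (fun ω => X ω - m) μ := hint.sub (integrable_const _)
  unfold powBregman
  rw [momentLambda_eq_integral_sub, integral_sub hφm (hXm.const_mul _),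
    integral_sub hφ (integrable_const _), integral_const_mul, integral_sub hint (integrable_const _)]
  simp [m]

theorem momentLambda_nonneg (hpos : ∀ ω, 0 < X ω) (hint : Integrable X μ)
    (hφ : Integrable (fun ω => powPotential s (X ω)) μ) : 0 ≤ momentLambda μ X s := by
  have hm : 0 < ∫ ω, X ω ∂μ := integral_pos_of_forall_pos hpos hint
  rw [momentLambda_eq_integral_powBregman hint hφ]
  exact integral_nonneg fun ω => powBregman_nonneg s hm (hpos ω)

theorem ofReal_momentLambda_eq_lintegral_prod (hX : Measurable X) (hpos : ∀ ω, 0 < X ω)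
    (hint : Integrable X μ) (hφ : Integrable (fun ω => powPotential s (X ω)) μ) :
    ENNReal.ofReal (momentLambda μ X s) = ∫⁻ p, taylorKernel (∫ ω, X ω ∂μ) (X p.1) p.2 *
      ENNReal.ofReal p.2 ^ (s - 2) ∂μ.prod volume := by
  have hm : 0 < ∫ ω, X ω ∂μ := integral_pos_of_forall_pos hpos hint
  have hmeas : Measurable fun p : Ω × ℝ => taylorKernel (∫ ω, X ω ∂μ) (X p.1) p.2 *
      ENNReal.ofReal p.2 ^ (s - 2) :=
    (measurable_const.taylorKernel (hX.comp measurable_fst) measurable_snd).mul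
      (measurable_snd.ennreal_ofReal.pow_const _)
  have hbreg : Integrable (fun ω => powBregman s (∫ ω, X ω ∂μ) (X ω)) μ :=
    (hφ.sub (integrable_const _)).sub ((hint.sub (integrable_const _)).const_mul _)
  rw [momentLambda_eq_integral_powBregman hint hφ, ofReal_integral_eq_lintegral_ofReal hbreg
    (ae_of_all _ fun ω => powBregman_nonneg s hm (hpos ω)), lintegral_prod _ hmeas.aemeasurable]
  exact lintegral_congr fun ω => ofReal_powBregman s hm (hpos ω)

end momentLambda

theorem momentLambda_midpoint_sq_le_of_pos {Ω : Type*} [MeasurableSpace Ω] {μ : Measure Ω}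
    [IsProbabilityMeasure μ] {X : Ω → ℝ} (hX : Measurable X) (hpos : ∀ ω, 0 < X ω)
    (hint : Integrable X μ) (hφ : ∀ s, Integrable (fun ω => powPotential s (X ω)) μ) (s t : ℝ) :
    momentLambda μ X ((s + t) / 2) ^ 2 ≤ momentLambda μ X s * momentLambda μ X t := by
  have hm : 0 < ∫ ω, X ω ∂μ := integral_pos_of_forall_pos hpos hint
  have hrepr (a : ℝ) := ofReal_momentLambda_eq_lintegral_prod hX hpos hint (hφ a)
  have hnonneg (a : ℝ) := momentLambda_nonneg hpos hint (hφ a)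
  have key := ENNReal.lintegral_mul_rpow_midpoint_sq_le (ν := μ.prod volume)
    (w := fun p => taylorKernel (∫ ω, X ω ∂μ) (X p.1) p.2) (g := fun p => ENNReal.ofReal p.2)
    (measurable_const.taylorKernel (hX.comp measurable_fst) measurable_snd).aemeasurable
    measurable_snd.ennreal_ofReal.aemeasurable
    (fun p hp => (ENNReal.ofReal_pos.2 (pos_of_taylorKernel_ne_zero hm (hpos p.1) hp)).ne')
    (fun _ => ENNReal.ofReal_ne_top) (s - 2) (t - 2)
  rw [show (s - 2 + (t - 2)) / 2 = (s + t) / 2 - 2 by ring, ← hrepr, ← hrepr, ← hrepr,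
    ← ENNReal.ofReal_pow (hnonneg _), ← ENNReal.ofReal_mul (hnonneg _)] at key
  exact (ENNReal.ofReal_le_ofReal_iff (mul_nonneg (hnonneg _) (hnonneg _))).1 key

theorem lambda_log_convex {Ω : Type*} [MeasurableSpace Ω] (μ : Measure Ω) [IsProbabilityMeasure μ]
    (X : Ω → ℝ) (hX : Measurable X) (hpos : ∀ᵐ ω ∂μ, 0 < X ω)
    (hmom : ∀ s : ℝ, Integrable (fun ω => X ω ^ s) μ)
    (hlog : Integrable (fun ω => Real.log (X ω)) μ)
    (hxlog : Integrable (fun ω => X ω * Real.log (X ω)) μ)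
    (s t : ℝ) :
    momentLambda μ X s * momentLambda μ X t - (momentLambda μ X ((s + t) / 2)) ^ 2 ≥ 0 := by
  set Y : Ω → ℝ := fun ω => if 0 < X ω then X ω else 1
  have hY : Measurable Y := Measurable.ite (measurableSet_lt measurable_const hX) hX measurable_const
  have hYpos : ∀ ω, 0 < Y ω := fun ω => by
    by_cases h : 0 < X ω <;> simp [Y, h]
  have hXY : X =ᵐ[μ] Y := hpos.mono fun ω h => (if_pos h).symm
  simp only [momentLambda_congr_ae hXY, ge_iff_le, sub_nonneg]
  have hint : Integrable X μ := by simpa using hmom 1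
  have hφ := integrable_powPotential_comp hmom hlog hxlog
  exact momentLambda_midpoint_sq_le_of_pos hY hYpos (hint.congr hXY)
    (fun a => (hφ a).congr (hXY.fun_comp (powPotential a))) s t
end

section
/- (Theorem 3) For all real numbers s, t, u, v, one has φ(s,t;u,v) := ξ(s,t)·ξ(u,v) − [ξ((s+u)/2, (t+v)/2) − ξ((s+v)/2, (t+u)/2)]² ≥ 0, where ξ(s,t) := λ_s λ_t − (λ_{(s+t)/2})². -/
open MeasureTheory

/-- `ξ(s,t) := λ_s λ_t - (λ_{(s+t)/2})²`. -/
noncomputable def momentXi {Ω : Type*} [MeasurableSpace Ω] (μ : Measure Ω) (X : Ω → ℝ)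
    (s t : ℝ) : ℝ :=
  momentLambda μ X s * momentLambda μ X t - (momentLambda μ X ((s + t) / 2)) ^ 2

/-!
Write `f_r` for the convex function with `f_r'' x = x ^ (r - 2)` on `(0, ∞)` (`x ^ r / (r (r - 1))`,
`-log x`, `x log x`). Then `λ_r = E f_r(X) - f_r(E X)` is the expected Bregman divergence of `f_r`,
and Taylor's formula with the Peano kernel `K` writes it as `∫∫ w ^ r · w⁻² K(E X, X, w) dw dℙ`.
So `λ_r = ∫ w ^ r dν` for one positive measure `ν` independent of `r`, and `M(b, c) := λ_{(b+c)/2}`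
is the Gram kernel of the functions `w ^ (b / 2)` in `L²(ν)`. The two `ξ` in the bracket of the
theorem have the same midpoint, so their squared terms cancel, and by the Binet–Cauchy identity
the bracket is half the inner product of `w^(s/2) ∧ w^(t/2)` and `w^(u/2) ∧ w^(v/2)`
in `L²(ν ⊗ ν)`, and `ξ(s, t)`, `ξ(u, v)` are half their squared norms: the theorem is the
Cauchy–Schwarz inequality there.
-/

open Set

section Gram

variable {α : Type*}

def wedge (f₁ f₂ : α → ℝ) (p : α × α) : ℝ := f₁ p.1 * f₂ p.2 - f₂ p.1 * f₁ p.2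

theorem wedge_mul_wedge_eq (f₁ f₂ f₃ f₄ : α → ℝ) (p : α × α) :
    wedge f₁ f₂ p * wedge f₃ f₄ p =
      (f₁ p.1 * f₃ p.1) * (f₂ p.2 * f₄ p.2) - (f₁ p.1 * f₄ p.1) * (f₂ p.2 * f₃ p.2)
        - ((f₂ p.1 * f₃ p.1) * (f₁ p.2 * f₄ p.2) - (f₂ p.1 * f₄ p.1) * (f₁ p.2 * f₃ p.2)) := by
  simp only [wedge]; ring

variable [MeasurableSpace α] {ν : Measure α}

theorem sq_integral_mul_le_integral_mul_self_mul {f g : α → ℝ}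
    (hf : Integrable (fun x => f x * f x) ν) (hg : Integrable (fun x => g x * g x) ν)
    (hfg : Integrable (fun x => f x * g x) ν) :
    (∫ x, f x * g x ∂ν) ^ 2 ≤ (∫ x, f x * f x ∂ν) * ∫ x, g x * g x ∂ν := by
  have hquad : ∀ c : ℝ, 0 ≤ (∫ x, g x * g x ∂ν) * (c * c) + (-2 * ∫ x, f x * g x ∂ν) * c
      + ∫ x, f x * f x ∂ν := by
    intro c
    have hexpand : ∫ x, (f x - c * g x) * (f x - c * g x) ∂ν
        = ∫ x, f x * f x ∂ν - 2 * c * ∫ x, f x * g x ∂ν + c ^ 2 * ∫ x, g x * g x ∂ν := by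
      simp_rw [show ∀ x, (f x - c * g x) * (f x - c * g x)
          = f x * f x - 2 * c * (f x * g x) + c ^ 2 * (g x * g x) from fun x => by ring]
      rw [integral_add, integral_sub, integral_const_mul, integral_const_mul]
      exacts [hf, hfg.const_mul _, hf.sub (hfg.const_mul _), hg.const_mul _]
    have hnonneg : 0 ≤ ∫ x, (f x - c * g x) * (f x - c * g x) ∂ν :=
      integral_nonneg fun x => mul_self_nonneg _
    linarith
  have hdisc := discrim_le_zero hquad
  rw [discrim] at hdisc
  nlinarith

variable {f₁ f₂ f₃ f₄ : α → ℝ}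

theorem integrable_wedge_mul_wedge (h₁ : MemLp f₁ 2 ν) (h₂ : MemLp f₂ 2 ν) (h₃ : MemLp f₃ 2 ν)
    (h₄ : MemLp f₄ 2 ν) : Integrable (fun p => wedge f₁ f₂ p * wedge f₃ f₄ p) (ν.prod ν) := by
  simp_rw [wedge_mul_wedge_eq]
  exact (((h₁.integrable_mul h₃).mul_prod (h₂.integrable_mul h₄)).sub
    ((h₁.integrable_mul h₄).mul_prod (h₂.integrable_mul h₃))).sub
    (((h₂.integrable_mul h₃).mul_prod (h₁.integrable_mul h₄)).sub
    ((h₂.integrable_mul h₄).mul_prod (h₁.integrable_mul h₃)))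

theorem integral_wedge_mul_wedge [SFinite ν] (h₁ : MemLp f₁ 2 ν) (h₂ : MemLp f₂ 2 ν)
    (h₃ : MemLp f₃ 2 ν) (h₄ : MemLp f₄ 2 ν) :
    ∫ p, wedge f₁ f₂ p * wedge f₃ f₄ p ∂(ν.prod ν) =
      2 * ((∫ x, f₁ x * f₃ x ∂ν) * (∫ x, f₂ x * f₄ x ∂ν)
        - (∫ x, f₁ x * f₄ x ∂ν) * (∫ x, f₂ x * f₃ x ∂ν)) := by
  have hsplit : ∀ {g₁ g₂ g₃ g₄ : α → ℝ}, MemLp g₁ 2 ν → MemLp g₂ 2 ν → MemLp g₃ 2 ν →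
      MemLp g₄ 2 ν → Integrable (fun p : α × α => (g₁ p.1 * g₂ p.1) * (g₃ p.2 * g₄ p.2))
        (ν.prod ν) ∧ ∫ p, (g₁ p.1 * g₂ p.1) * (g₃ p.2 * g₄ p.2) ∂(ν.prod ν)
          = (∫ x, g₁ x * g₂ x ∂ν) * ∫ x, g₃ x * g₄ x ∂ν := by
    intro g₁ g₂ g₃ g₄ k₁ k₂ k₃ k₄
    exact ⟨(k₁.integrable_mul k₂).mul_prod (k₃.integrable_mul k₄),
      integral_prod_mul (fun x => g₁ x * g₂ x) (fun x => g₃ x * g₄ x)⟩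
  have t₁ := hsplit h₁ h₃ h₂ h₄
  have t₂ := hsplit h₁ h₄ h₂ h₃
  have t₃ := hsplit h₂ h₃ h₁ h₄
  have t₄ := hsplit h₂ h₄ h₁ h₃
  simp_rw [wedge_mul_wedge_eq]
  rw [integral_sub, integral_sub t₁.1 t₂.1, integral_sub t₃.1 t₄.1, t₁.2, t₂.2, t₃.2, t₄.2]
  · ring
  exacts [t₁.1.sub t₂.1, t₃.1.sub t₄.1]

theorem sq_gram_minor_le [SFinite ν] (h₁ : MemLp f₁ 2 ν) (h₂ : MemLp f₂ 2 ν)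
    (h₃ : MemLp f₃ 2 ν) (h₄ : MemLp f₄ 2 ν) :
    ((∫ x, f₁ x * f₃ x ∂ν) * (∫ x, f₂ x * f₄ x ∂ν)
        - (∫ x, f₁ x * f₄ x ∂ν) * (∫ x, f₂ x * f₃ x ∂ν)) ^ 2 ≤
      ((∫ x, f₁ x * f₁ x ∂ν) * (∫ x, f₂ x * f₂ x ∂ν) - (∫ x, f₁ x * f₂ x ∂ν) ^ 2) *
        ((∫ x, f₃ x * f₃ x ∂ν) * (∫ x, f₄ x * f₄ x ∂ν) - (∫ x, f₃ x * f₄ x ∂ν) ^ 2) := by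
  have hcs := sq_integral_mul_le_integral_mul_self_mul
    (integrable_wedge_mul_wedge h₁ h₂ h₁ h₂) (integrable_wedge_mul_wedge h₃ h₄ h₃ h₄)
    (integrable_wedge_mul_wedge h₁ h₂ h₃ h₄)
  rw [integral_wedge_mul_wedge h₁ h₂ h₁ h₂, integral_wedge_mul_wedge h₃ h₄ h₃ h₄,
    integral_wedge_mul_wedge h₁ h₂ h₃ h₄] at hcs
  simp_rw [mul_comm (f₂ _) (f₁ _), mul_comm (f₄ _) (f₃ _)] at hcs
  nlinarith

theorem memLp_two_rpow_half {g : α → ℝ} (hg : ∀ᵐ x ∂ν, 0 < g x)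
    (hint : ∀ r : ℝ, Integrable (fun x => g x ^ r) ν) (b : ℝ) :
    MemLp (fun x => g x ^ (b / 2)) 2 ν := by
  refine (memLp_two_iff_integrable_sq (hint _).aestronglyMeasurable).2 ((hint b).congr ?_)
  filter_upwards [hg] with x hx
  rw [← Real.rpow_mul_natCast hx.le]
  norm_num

theorem integral_rpow_half_mul_rpow_half {g : α → ℝ} (hg : ∀ᵐ x ∂ν, 0 < g x) (b c : ℝ) :
    ∫ x, g x ^ (b / 2) * g x ^ (c / 2) ∂ν = ∫ x, g x ^ ((b + c) / 2) ∂ν := by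
  refine integral_congr_ae ?_
  filter_upwards [hg] with x hx
  rw [← Real.rpow_add hx, add_div]

theorem sq_moment_minor_le [SFinite ν] {g : α → ℝ} (hg : ∀ᵐ x ∂ν, 0 < g x)
    (hint : ∀ r : ℝ, Integrable (fun x => g x ^ r) ν) {M : ℝ → ℝ}
    (hM : ∀ r, M r = ∫ x, g x ^ r ∂ν) (s t u v : ℝ) :
    (M ((s + u) / 2) * M ((t + v) / 2) - M ((s + v) / 2) * M ((t + u) / 2)) ^ 2 ≤
      (M s * M t - M ((s + t) / 2) ^ 2) * (M u * M v - M ((u + v) / 2) ^ 2) := by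
  have h := sq_gram_minor_le (memLp_two_rpow_half hg hint s) (memLp_two_rpow_half hg hint t)
    (memLp_two_rpow_half hg hint u) (memLp_two_rpow_half hg hint v)
  simp only [integral_rpow_half_mul_rpow_half hg, add_self_div_two, ← hM] at h
  exact h

end Gram

theorem integral_sub_mul_eq_taylor_remainder {f f' f'' : ℝ → ℝ} {a x : ℝ}
    (hf : ∀ w ∈ uIcc a x, HasDerivAt f (f' w) w)
    (hf' : ∀ w ∈ uIcc a x, HasDerivAt f' (f'' w) w) (hf'' : ContinuousOn f'' (uIcc a x)) :
    ∫ w in a..x, (x - w) * f'' w = f x - f a - f' a * (x - a) := by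
  have hderiv : ∀ w ∈ uIcc a x,
      HasDerivAt (fun w => (x - w) * f' w + f w) ((x - w) * f'' w) w := by
    intro w hw
    exact ((((hasDerivAt_id' w).const_sub x).fun_mul (hf' w hw)).fun_add
      (hf w hw)).congr_deriv (by ring)
  rw [intervalIntegral.integral_eq_sub_of_hasDerivAt hderiv
    ((continuousOn_const.sub continuousOn_id).mul hf'').intervalIntegrable]
  ring

/-- `f x - f a - f' a * (x - a) = ∫ f'' w * peanoKernel a x w dw`. -/
noncomputable def peanoKernel (a x w : ℝ) : ℝ := (uIoc a x).indicator (fun w => |x - w|) w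

theorem peanoKernel_nonneg (a x w : ℝ) : 0 ≤ peanoKernel a x w :=
  indicator_nonneg (fun _ _ => abs_nonneg _) _

theorem measurable_peanoKernel (a : ℝ) : Measurable fun p : ℝ × ℝ => peanoKernel a p.1 p.2 := by
  have hset : MeasurableSet {p : ℝ × ℝ | p.2 ∈ uIoc a p.1} := by
    simp only [uIoc, mem_Ioc, ofPred_and]
    exact (measurableSet_lt (by fun_prop) (by fun_prop)).inter
      (measurableSet_le (by fun_prop) (by fun_prop))
  simp only [peanoKernel]
  exact Measurable.ite hset (by fun_prop) measurable_const

theorem integrable_mul_peanoKernel {g : ℝ → ℝ} {a x : ℝ} (hg : ContinuousOn g (uIcc a x)) :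
    Integrable fun w => g w * peanoKernel a x w := by
  simp only [peanoKernel, ← indicator_mul_right]
  refine (integrable_indicator_iff measurableSet_uIoc).2 ?_
  exact ((hg.mul (continuous_const.sub continuous_id).abs.continuousOn).integrableOn_compact
    isCompact_uIcc).mono_set uIoc_subset_uIcc

theorem integral_mul_peanoKernel (g : ℝ → ℝ) (a x : ℝ) :
    ∫ w, g w * peanoKernel a x w = ∫ w in a..x, (x - w) * g w := by
  simp only [peanoKernel, ← indicator_mul_right]
  rw [integral_indicator measurableSet_uIoc, intervalIntegral.intervalIntegral_eq_integral_uIoc]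
  rcases le_or_gt a x with hax | hxa
  · rw [if_pos hax, one_smul, uIoc_of_le hax]
    refine setIntegral_congr_fun measurableSet_Ioc fun w hw => ?_
    simp only [abs_of_nonneg (sub_nonneg.2 hw.2), mul_comm]
  · rw [if_neg hxa.not_ge, uIoc_of_ge hxa.le, neg_one_smul, ← integral_neg]
    refine setIntegral_congr_fun measurableSet_Ioc fun w hw => ?_
    simp only [abs_of_neg (sub_neg.2 hw.1)]
    ring

theorem continuousOn_rpow_uIcc {a x : ℝ} (ha : 0 < a) (hx : 0 < x) (c : ℝ) :
    ContinuousOn (fun w => w ^ c) (uIcc a x) := fun w hw =>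
  (Real.continuousAt_rpow_const w c
    (Or.inl (lt_of_lt_of_le (lt_min ha hx) hw.1).ne')).continuousWithinAt

theorem pos_of_peanoKernel_ne_zero {a x w : ℝ} (ha : 0 < a) (hx : 0 < x)
    (h : peanoKernel a x w ≠ 0) : 0 < w :=
  lt_trans (lt_min ha hx) (mem_of_indicator_ne_zero h).1

theorem rpow_mul_peanoKernel_nonneg {a x : ℝ} (ha : 0 < a) (hx : 0 < x) (c w : ℝ) :
    0 ≤ w ^ c * peanoKernel a x w := by
  by_cases hK : peanoKernel a x w = 0
  · simp [hK]
  · exact mul_nonneg (Real.rpow_nonneg (pos_of_peanoKernel_ne_zero ha hx hK).le _)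
      (peanoKernel_nonneg a x w)

noncomputable def powerGenerator (r x : ℝ) : ℝ :=
  if r = 0 then -Real.log x else if r = 1 then x * Real.log x else x ^ r / (r * (r - 1))

noncomputable def powerGeneratorDeriv (r x : ℝ) : ℝ :=
  if r = 0 then -x⁻¹ else if r = 1 then Real.log x + 1 else x ^ (r - 1) / (r - 1)

noncomputable def powerBregman (r a x : ℝ) : ℝ :=
  powerGenerator r x - powerGenerator r a - powerGeneratorDeriv r a * (x - a)

theorem hasDerivAt_powerGenerator (r : ℝ) {x : ℝ} (hx : 0 < x) :
    HasDerivAt (powerGenerator r) (powerGeneratorDeriv r x) x := by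
  unfold powerGenerator powerGeneratorDeriv
  split_ifs with h₀ h₁
  · exact (Real.hasDerivAt_log hx.ne').neg
  · exact Real.hasDerivAt_mul_log hx.ne'
  · have hr : r - 1 ≠ 0 := sub_ne_zero.2 h₁
    refine ((Real.hasDerivAt_rpow_const (Or.inl hx.ne')).div_const (r * (r - 1))).congr_deriv ?_
    field_simp

theorem hasDerivAt_powerGeneratorDeriv (r : ℝ) {x : ℝ} (hx : 0 < x) :
    HasDerivAt (powerGeneratorDeriv r) (x ^ (r - 2)) x := by
  unfold powerGeneratorDeriv
  split_ifs with h₀ h₁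
  · subst h₀
    refine (hasDerivAt_inv hx.ne').neg.congr_deriv ?_
    rw [zero_sub, Real.rpow_neg hx.le, Real.rpow_two, neg_neg]
  · subst h₁
    refine ((Real.hasDerivAt_log hx.ne').add_const 1).congr_deriv ?_
    norm_num [Real.rpow_neg_one]
  · have hr : r - 1 ≠ 0 := sub_ne_zero.2 h₁
    refine ((Real.hasDerivAt_rpow_const (Or.inl hx.ne')).div_const (r - 1)).congr_deriv ?_
    rw [sub_sub, one_add_one_eq_two]
    field_simp

theorem integral_rpow_mul_peanoKernel {a x : ℝ} (ha : 0 < a) (hx : 0 < x) (r : ℝ) :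
    ∫ w, w ^ (r - 2) * peanoKernel a x w = powerBregman r a x := by
  have hpos : ∀ w ∈ uIcc a x, 0 < w := fun w hw => lt_of_lt_of_le (lt_min ha hx) hw.1
  rw [integral_mul_peanoKernel]
  exact integral_sub_mul_eq_taylor_remainder
    (fun w hw => hasDerivAt_powerGenerator r (hpos w hw))
    (fun w hw => hasDerivAt_powerGeneratorDeriv r (hpos w hw)) (continuousOn_rpow_uIcc ha hx _)

section Moments

variable {Ω : Type*} [MeasurableSpace Ω] {μ : Measure Ω} {X : Ω → ℝ}

theorem integral_pos_of_ae_pos [NeZero μ] (hpos : ∀ᵐ ω ∂μ, 0 < X ω)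
    (hX : Integrable X μ) : 0 < ∫ ω, X ω ∂μ := by
  rw [integral_pos_iff_support_of_nonneg_ae (hpos.mono fun ω h => h.le) hX]
  have hsupp : Function.support X =ᵐ[μ] univ :=
    ae_eq_univ.2 (mem_ae_iff.1 (hpos.mono fun ω h => h.ne'))
  simp [measure_congr hsupp, NeZero.ne μ]

theorem integrable_powerGenerator_comp (hmom : ∀ s : ℝ, Integrable (fun ω => X ω ^ s) μ)
    (hlog : Integrable (fun ω => Real.log (X ω)) μ)
    (hxlog : Integrable (fun ω => X ω * Real.log (X ω)) μ) (r : ℝ) :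
    Integrable (fun ω => powerGenerator r (X ω)) μ := by
  unfold powerGenerator
  split_ifs
  exacts [hlog.neg, hxlog, (hmom r).div_const _]

theorem momentLambda_eq_integral_powerGenerator_sub (r : ℝ) :
    momentLambda μ X r = ∫ ω, powerGenerator r (X ω) ∂μ - powerGenerator r (∫ ω, X ω ∂μ) := by
  unfold momentLambda powerGenerator
  split_ifs
  · rw [integral_neg]; ring
  · rfl
  · rw [integral_div, sub_div]

theorem momentLambda_eq_integral_powerBregman [IsProbabilityMeasure μ] (hX : Integrable X μ)
    {r : ℝ} (hf : Integrable (fun ω => powerGenerator r (X ω)) μ) :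
    momentLambda μ X r = ∫ ω, powerBregman r (∫ ω, X ω ∂μ) (X ω) ∂μ := by
  unfold powerBregman
  rw [integral_sub, integral_sub hf (integrable_const _), integral_const_mul,
    integral_sub hX (integrable_const _)]
  · simp [momentLambda_eq_integral_powerGenerator_sub]
  exacts [hf.sub (integrable_const _), (hX.sub (integrable_const _)).const_mul _]

theorem integrable_powerBregman_comp [IsFiniteMeasure μ] (hX : Integrable X μ) {r : ℝ}
    (hf : Integrable (fun ω => powerGenerator r (X ω)) μ) (a : ℝ) :
    Integrable (fun ω => powerBregman r a (X ω)) μ :=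
  (hf.sub (integrable_const _)).sub ((hX.sub (integrable_const _)).const_mul _)

theorem measurable_rpow_mul_peanoKernel (hXm : Measurable X) (a c : ℝ) :
    Measurable fun p : Ω × ℝ => p.2 ^ c * peanoKernel a (X p.1) p.2 :=
  (measurable_snd.pow_const c).mul
    ((measurable_peanoKernel a).comp ((hXm.comp measurable_fst).prodMk measurable_snd))

theorem integrable_prod_rpow_mul_peanoKernel [SFinite μ] (hXm : Measurable X)
    (hpos : ∀ᵐ ω ∂μ, 0 < X ω) {a r : ℝ} (ha : 0 < a)
    (hB : Integrable (fun ω => powerBregman r a (X ω)) μ) :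
    Integrable (fun p : Ω × ℝ => p.2 ^ (r - 2) * peanoKernel a (X p.1) p.2) (μ.prod volume) := by
  rw [integrable_prod_iff (measurable_rpow_mul_peanoKernel hXm a _).aestronglyMeasurable]
  refine ⟨hpos.mono fun ω hω => integrable_mul_peanoKernel (continuousOn_rpow_uIcc ha hω _),
    hB.congr ?_⟩
  filter_upwards [hpos] with ω hω
  simp_rw [Real.norm_eq_abs, abs_of_nonneg (rpow_mul_peanoKernel_nonneg ha hω _ _)]
  exact (integral_rpow_mul_peanoKernel ha hω r).symm

theorem integral_prod_rpow_mul_peanoKernel [SFinite μ] (hXm : Measurable X)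
    (hpos : ∀ᵐ ω ∂μ, 0 < X ω) {a r : ℝ} (ha : 0 < a)
    (hB : Integrable (fun ω => powerBregman r a (X ω)) μ) :
    ∫ p : Ω × ℝ, p.2 ^ (r - 2) * peanoKernel a (X p.1) p.2 ∂(μ.prod volume) =
      ∫ ω, powerBregman r a (X ω) ∂μ := by
  rw [integral_prod _ (integrable_prod_rpow_mul_peanoKernel hXm hpos ha hB)]
  exact integral_congr_ae (hpos.mono fun ω hω => integral_rpow_mul_peanoKernel ha hω r)

noncomputable def peanoMeasure (μ : Measure Ω) (X : Ω → ℝ) : Measure (Ω × ℝ) :=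
  (μ.prod volume).withDensity fun p =>
    ENNReal.ofReal (p.2 ^ (-2 : ℝ) * peanoKernel (∫ ω, X ω ∂μ) (X p.1) p.2)

instance [SFinite μ] : SFinite (peanoMeasure μ X) := by
  unfold peanoMeasure; infer_instance

theorem rpow_mul_toReal_peanoDensity {a x : ℝ} (ha : 0 < a) (hx : 0 < x) (r w : ℝ) :
    w ^ r * (ENNReal.ofReal (w ^ (-2 : ℝ) * peanoKernel a x w)).toReal =
      w ^ (r - 2) * peanoKernel a x w := by
  by_cases hK : peanoKernel a x w = 0
  · simp [hK]
  have hw := pos_of_peanoKernel_ne_zero ha hx hK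
  rw [ENNReal.toReal_ofReal (rpow_mul_peanoKernel_nonneg ha hx _ _), ← mul_assoc,
    ← Real.rpow_add hw, ← sub_eq_add_neg]

theorem ae_snd_pos_peanoMeasure [SFinite μ] (hXm : Measurable X) (hpos : ∀ᵐ ω ∂μ, 0 < X ω)
    (ha : 0 < ∫ ω, X ω ∂μ) : ∀ᵐ p ∂peanoMeasure μ X, 0 < p.2 := by
  rw [peanoMeasure, ae_withDensity_iff (measurable_rpow_mul_peanoKernel hXm _ _).ennreal_ofReal]
  filter_upwards [Measure.quasiMeasurePreserving_fst.ae hpos] with p hp hdens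
  refine pos_of_peanoKernel_ne_zero ha hp fun hK => hdens ?_
  simp [hK]

theorem integrable_rpow_peanoMeasure [SFinite μ] (hXm : Measurable X) (hpos : ∀ᵐ ω ∂μ, 0 < X ω)
    (ha : 0 < ∫ ω, X ω ∂μ) {r : ℝ}
    (hB : Integrable (fun ω => powerBregman r (∫ ω, X ω ∂μ) (X ω)) μ) :
    Integrable (fun p => p.2 ^ r) (peanoMeasure μ X) := by
  rw [peanoMeasure, integrable_withDensity_iff
    (measurable_rpow_mul_peanoKernel hXm _ _).ennreal_ofReal
    (ae_of_all _ fun _ => ENNReal.ofReal_lt_top)]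
  refine (integrable_prod_rpow_mul_peanoKernel hXm hpos ha hB).congr ?_
  filter_upwards [Measure.quasiMeasurePreserving_fst.ae hpos] with p hp
  exact (rpow_mul_toReal_peanoDensity ha hp r p.2).symm

theorem momentLambda_eq_integral_rpow_peanoMeasure [IsProbabilityMeasure μ] (hXm : Measurable X)
    (hpos : ∀ᵐ ω ∂μ, 0 < X ω) (hX : Integrable X μ) (ha : 0 < ∫ ω, X ω ∂μ) {r : ℝ}
    (hf : Integrable (fun ω => powerGenerator r (X ω)) μ) :
    momentLambda μ X r = ∫ p, p.2 ^ r ∂peanoMeasure μ X := by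
  rw [peanoMeasure, integral_withDensity_eq_integral_toReal_smul
    (measurable_rpow_mul_peanoKernel hXm _ _).ennreal_ofReal
    (ae_of_all _ fun _ => ENNReal.ofReal_lt_top),
    momentLambda_eq_integral_powerBregman hX hf,
    ← integral_prod_rpow_mul_peanoKernel hXm hpos ha (integrable_powerBregman_comp hX hf _)]
  refine integral_congr_ae ?_
  filter_upwards [Measure.quasiMeasurePreserving_fst.ae hpos] with p hp
  rw [smul_eq_mul, mul_comm _ (p.2 ^ r)]
  exact (rpow_mul_toReal_peanoDensity ha hp r p.2).symm

end Moments

theorem theorem3 {Ω : Type*} [MeasurableSpace Ω] (μ : Measure Ω) [IsProbabilityMeasure μ]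
    (X : Ω → ℝ) (hX : Measurable X) (hpos : ∀ᵐ ω ∂μ, 0 < X ω)
    (hmom : ∀ s : ℝ, Integrable (fun ω => X ω ^ s) μ)
    (hlog : Integrable (fun ω => Real.log (X ω)) μ)
    (hxlog : Integrable (fun ω => X ω * Real.log (X ω)) μ)
    (s t u v : ℝ) :
    momentXi μ X s t * momentXi μ X u v -
      (momentXi μ X ((s + u) / 2) ((t + v) / 2) -
        momentXi μ X ((s + v) / 2) ((t + u) / 2)) ^ 2 ≥ 0 := by
  have hXint : Integrable X μ := by simpa using hmom 1
  have ha := integral_pos_of_ae_pos hpos hXint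
  have hf := integrable_powerGenerator_comp hmom hlog hxlog
  have key := sq_moment_minor_le (ae_snd_pos_peanoMeasure hX hpos ha)
    (fun r => integrable_rpow_peanoMeasure hX hpos ha (integrable_powerBregman_comp hXint (hf r) _))
    (fun r => momentLambda_eq_integral_rpow_peanoMeasure hX hpos hXint ha (hf r)) s t u v
  simp only [momentXi]
  rw [show ((s + u) / 2 + (t + v) / 2) / 2 = ((s + v) / 2 + (t + u) / 2) / 2 by ring,
    sub_sub_sub_cancel_right]
  linarith
end

section
/- (Theorem 4) For all real numbers r, s, v, one has φ(r,s;r,v)·φ(r,v;s,v) ≥ [ξ(r,v)·(ξ(s,(r+v)/2) − ξ((r+s)/2,(s+v)/2)) + (ξ(r,(s+v)/2) − ξ((r+s)/2,(r+v)/2))·(ξ(v,(r+s)/2) − ξ((r+v)/2,(s+v)/2))]², where ξ(s,t) := λ_s λ_t − (λ_{(s+t)/2})² and φ(s,t;u,v) := ξ(s,t)·ξ(u,v) − [ξ((s+u)/2,(t+v)/2) − ξ((s+v)/2,(t+u)/2)]². -/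
open MeasureTheory

/-- `φ(s,t;u,v) := ξ(s,t)ξ(u,v) - [ξ((s+u)/2,(t+v)/2) - ξ((s+v)/2,(t+u)/2)]²`. -/
noncomputable def momentPhi {Ω : Type*} [MeasurableSpace Ω] (μ : Measure Ω) (X : Ω → ℝ)
    (s t u v : ℝ) : ℝ :=
  momentXi μ X s t * momentXi μ X u v -
    (momentXi μ X ((s + u) / 2) ((t + v) / 2) - momentXi μ X ((s + v) / 2) ((t + u) / 2)) ^ 2

/-! Put `D := det (λ_{(pᵢ + pⱼ)/2})ᵢⱼ` for `p = (r, s, v)`. Expanding the definitions,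
`φ(r,s;r,v) = λ_r D`, `φ(r,v;s,v) = λ_v D`, and the bracketed quantity equals `λ_{(r+v)/2} D`,
so the inequality is `λ_{(r+v)/2}² D² ≤ λ_r λ_v D²`, i.e. midpoint log-convexity of `t ↦ λ_t`.

With `c = E[X]`, Taylor's formula for `u ↦ u^t / (t(t-1))` at `c` gives
`λ_t = E[∫_c^X |X - u| u^(t-2) du]`, since the linear Taylor term has mean zero. Cauchy–Schwarz
in `u` makes the inner integral log-convex in `t`, and Cauchy–Schwarz in `ω` passes this to `λ_t`.
-/

open Set
open scoped Interval

theorem integral_pos_of_ae_pos_s11 {α : Type*} [MeasurableSpace α] {μ : Measure α} [NeZero μ]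
    {f : α → ℝ} (hf : Integrable f μ) (hpos : ∀ᵐ x ∂μ, 0 < f x) : 0 < ∫ x, f x ∂μ := by
  rw [integral_pos_iff_support_of_nonneg_ae (hpos.mono fun _ h => h.le) hf]
  refine pos_iff_ne_zero.2 fun h0 => ?_
  have hzero : ∀ᵐ x ∂μ, f x = 0 := by simpa [ae_iff, Function.support] using h0
  obtain ⟨x, hx, hx0⟩ := (hpos.and hzero).exists
  exact hx.ne' hx0

theorem quadratic_nonneg_of_sq_le_mul {a b c : ℝ} (ha : 0 ≤ a) (hc : 0 ≤ c) (h : b ^ 2 ≤ a * c)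
    (t : ℝ) : 0 ≤ a * (t * t) + (-2 * b) * t + c := by
  rcases ha.eq_or_lt with rfl | ha
  · obtain rfl : b = 0 := by nlinarith
    linarith
  · nlinarith [sq_nonneg (a * t - b)]

theorem sq_integral_le_integral_mul_integral {α : Type*} [MeasurableSpace α] {μ : Measure α}
    {f g h : α → ℝ} (hf : Integrable f μ) (hg : Integrable g μ) (hh : Integrable h μ)
    (hf0 : 0 ≤ᵐ[μ] f) (hg0 : 0 ≤ᵐ[μ] g) (hfgh : ∀ᵐ x ∂μ, h x ^ 2 ≤ f x * g x) :
    (∫ x, h x ∂μ) ^ 2 ≤ (∫ x, f x ∂μ) * ∫ x, g x ∂μ := by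
  have hquad (t : ℝ) :
      0 ≤ (∫ x, f x ∂μ) * (t * t) + (-2 * ∫ x, h x ∂μ) * t + ∫ x, g x ∂μ := by
    have hpt : ∀ᵐ x ∂μ, 0 ≤ f x * (t * t) + (-2 * h x) * t + g x := by
      filter_upwards [hf0, hg0, hfgh] with x hfx hgx hx
      exact quadratic_nonneg_of_sq_le_mul hfx hgx hx t
    have hft := hf.mul_const (t * t)
    have hht := (hh.const_mul (-2)).mul_const t
    calc 0 ≤ ∫ x, (f x * (t * t) + (-2 * h x) * t + g x) ∂μ := integral_nonneg_of_ae hpt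
      _ = _ := by
        rw [integral_add (hft.fun_add hht) hg, integral_add hft hht, integral_mul_const,
          integral_mul_const, integral_const_mul]
  have hdisc := discrim_le_zero hquad
  unfold discrim at hdisc
  nlinarith

theorem setIntegral_uIoc_abs_sub_mul (c x : ℝ) (f : ℝ → ℝ) :
    ∫ u in Ι c x, |x - u| * f u = ∫ u in c..x, (x - u) * f u := by
  rcases le_total c x with hcx | hxc
  · rw [uIoc_of_le hcx, intervalIntegral.integral_of_le hcx]
    refine setIntegral_congr_fun measurableSet_Ioc fun u hu => ?_
    rw [abs_of_nonneg (sub_nonneg.2 hu.2)]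
  · rw [uIoc_of_ge hxc, intervalIntegral.integral_of_ge hxc, ← integral_neg]
    refine setIntegral_congr_fun measurableSet_Ioc fun u hu => ?_
    rw [abs_of_nonpos (sub_nonpos.2 hu.1.le), neg_mul]

/-- The Taylor remainder at `c` of `u ↦ u ^ t / (t (t - 1))`, whose second derivative is
`u ^ (t - 2)`. -/
noncomputable def rpowRemainder (c x t : ℝ) : ℝ := ∫ u in Ι c x, |x - u| * u ^ (t - 2)

section rpowRemainder

variable {c x : ℝ}

theorem rpowRemainder_nonneg (hc : 0 < c) (hx : 0 < x) (t : ℝ) : 0 ≤ rpowRemainder c x t :=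
  setIntegral_nonneg measurableSet_uIoc fun u hu =>
    have : 0 < u := (lt_min hc hx).trans hu.1
    by positivity

theorem integrableOn_abs_sub_mul_rpow (hc : 0 < c) (hx : 0 < x) (t : ℝ) :
    IntegrableOn (fun u => |x - u| * u ^ (t - 2)) (Ι c x) := by
  rw [← intervalIntegrable_iff]
  refine ContinuousOn.intervalIntegrable fun u hu => ?_
  have : 0 < u := (lt_min hc hx).trans_le hu.1
  exact ((continuous_const.sub continuous_id).abs.continuousAt.mul
    (Real.continuousAt_rpow_const u _ (Or.inl this.ne'))).continuousWithinAt

theorem sq_rpowRemainder_midpoint_le (hc : 0 < c) (hx : 0 < x) (a b : ℝ) :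
    rpowRemainder c x ((a + b) / 2) ^ 2 ≤ rpowRemainder c x a * rpowRemainder c x b := by
  have hnonneg (t : ℝ) : 0 ≤ᵐ[volume.restrict (Ι c x)] fun u => |x - u| * u ^ (t - 2) := by
    refine (ae_restrict_iff' measurableSet_uIoc).2 (ae_of_all _ fun u hu => ?_)
    have : 0 < u := (lt_min hc hx).trans hu.1
    positivity
  refine sq_integral_le_integral_mul_integral (integrableOn_abs_sub_mul_rpow hc hx a)
    (integrableOn_abs_sub_mul_rpow hc hx b) (integrableOn_abs_sub_mul_rpow hc hx _)
    (hnonneg a) (hnonneg b)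
    ((ae_restrict_iff' measurableSet_uIoc).2 (ae_of_all _ fun u hu => ?_))
  have hu : 0 < u := (lt_min hc hx).trans hu.1
  have hexp : u ^ ((a + b) / 2 - 2) * u ^ ((a + b) / 2 - 2) = u ^ (a - 2) * u ^ (b - 2) := by
    rw [← Real.rpow_add hu, ← Real.rpow_add hu]
    ring_nf
  exact le_of_eq (by linear_combination |x - u| ^ 2 * hexp)

theorem rpowRemainder_eq (hc : 0 < c) (hx : 0 < x) (t : ℝ) :
    rpowRemainder c x t = x * (∫ u in c..x, u ^ (t - 2)) - ∫ u in c..x, u ^ (t - 1) := by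
  have h0 : (0 : ℝ) ∉ uIcc c x := notMem_uIcc_of_lt hc hx
  have hint (p : ℝ) : IntervalIntegrable (fun u => u ^ p) volume c x :=
    intervalIntegral.intervalIntegrable_rpow (Or.inr h0)
  rw [rpowRemainder, setIntegral_uIoc_abs_sub_mul, ← intervalIntegral.integral_const_mul,
    ← intervalIntegral.integral_sub ((hint _).const_mul x) (hint _)]
  refine intervalIntegral.integral_congr fun u hu => ?_
  have : 0 < u := (lt_min hc hx).trans_le hu.1
  rw [show t - 1 = t - 2 + 1 by ring, Real.rpow_add_one this.ne']
  ring

theorem rpowRemainder_of_ne (hc : 0 < c) (hx : 0 < x) {t : ℝ} (ht0 : t ≠ 0) (ht1 : t ≠ 1) :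
    rpowRemainder c x t = (x ^ t - c ^ t - t * c ^ (t - 1) * (x - c)) / (t * (t - 1)) := by
  have h0 : (0 : ℝ) ∉ uIcc c x := notMem_uIcc_of_lt hc hx
  rw [rpowRemainder_eq hc hx, integral_rpow (Or.inr ⟨by contrapose! ht1; linarith, h0⟩),
    integral_rpow (Or.inr ⟨by contrapose! ht0; linarith, h0⟩),
    show t - 2 + 1 = t - 1 by ring, sub_add_cancel]
  have hxt : x ^ t = x ^ (t - 1) * x := by rw [← Real.rpow_add_one hx.ne', sub_add_cancel]
  have hct : c ^ t = c ^ (t - 1) * c := by rw [← Real.rpow_add_one hc.ne', sub_add_cancel]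
  have ht1' : t - 1 ≠ 0 := sub_ne_zero.2 ht1
  field_simp
  rw [hxt, hct]
  ring

theorem integral_rpow_neg_one (hc : 0 < c) (hx : 0 < x) :
    ∫ u in c..x, u ^ (-1 : ℝ) = Real.log x - Real.log c := by
  simp only [Real.rpow_neg_one]
  rw [integral_inv_of_pos hc hx, Real.log_div hx.ne' hc.ne']

theorem rpowRemainder_zero (hc : 0 < c) (hx : 0 < x) :
    rpowRemainder c x 0 = x / c - 1 - Real.log x + Real.log c := by
  rw [rpowRemainder_eq hc hx, zero_sub, zero_sub, integral_rpow_neg_one hc hx,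
    integral_rpow (Or.inr ⟨by norm_num, notMem_uIcc_of_lt hc hx⟩)]
  norm_num [Real.rpow_neg_one]
  field_simp
  ring

theorem rpowRemainder_one (hc : 0 < c) (hx : 0 < x) :
    rpowRemainder c x 1 = x * (Real.log x - Real.log c) - (x - c) := by
  rw [rpowRemainder_eq hc hx, sub_self, show (1 : ℝ) - 2 = -1 by norm_num,
    integral_rpow_neg_one hc hx]
  simp

end rpowRemainder

section Moments

variable {Ω : Type*} [MeasurableSpace Ω] {μ : Measure Ω} [IsProbabilityMeasure μ] {X : Ω → ℝ}

theorem integral_mul_add_mul_add_const {f g : Ω → ℝ} (hf : Integrable f μ) (hg : Integrable g μ)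
    (a b d : ℝ) : ∫ ω, (a * f ω + b * g ω + d) ∂μ = a * (∫ ω, f ω ∂μ) + b * (∫ ω, g ω ∂μ) + d := by
  rw [integral_add ((hf.const_mul a).fun_add (hg.const_mul b)) (integrable_const d),
    integral_add (hf.const_mul a) (hg.const_mul b), integral_const_mul, integral_const_mul,
    integral_const, probReal_univ, one_smul]

theorem momentLambda_eq_integral_rpowRemainder (hpos : ∀ᵐ ω ∂μ, 0 < X ω)
    (hmom : ∀ s : ℝ, Integrable (fun ω => X ω ^ s) μ)
    (hlog : Integrable (fun ω => Real.log (X ω)) μ)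
    (hxlog : Integrable (fun ω => X ω * Real.log (X ω)) μ) (t : ℝ) :
    Integrable (fun ω => rpowRemainder (∫ ω, X ω ∂μ) (X ω) t) μ ∧
      momentLambda μ X t = ∫ ω, rpowRemainder (∫ ω, X ω ∂μ) (X ω) t ∂μ := by
  set c := ∫ ω, X ω ∂μ
  have hX : Integrable X μ := by simpa using hmom 1
  have hc : 0 < c := integral_pos_of_ae_pos_s11 hX hpos
  obtain ⟨φ, a, b, d, hφ, hrepr, hval⟩ : ∃ (φ : Ω → ℝ) (a b d : ℝ), Integrable φ μ ∧
      (∀ᵐ ω ∂μ, rpowRemainder c (X ω) t = a * φ ω + b * X ω + d) ∧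
      momentLambda μ X t = a * (∫ ω, φ ω ∂μ) + b * c + d := by
    -- the remainder is affine in `X` and in one of `log X`, `X log X`, `X ^ t`
    by_cases ht0 : t = 0
    · refine ⟨_, -1, 1 / c, Real.log c - 1, hlog, hpos.mono fun ω hω => ?_, ?_⟩
      · rw [ht0, rpowRemainder_zero hc hω]
        ring
      · rw [momentLambda, if_pos ht0]
        field_simp
        ring
    by_cases ht1 : t = 1
    · refine ⟨_, 1, -Real.log c - 1, c, hxlog, hpos.mono fun ω hω => ?_, ?_⟩
      · rw [ht1, rpowRemainder_one hc hω]
        ring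
      · rw [momentLambda, if_neg ht0, if_pos ht1]
        ring
    · have htt : t * (t - 1) ≠ 0 := mul_ne_zero ht0 (sub_ne_zero.2 ht1)
      refine ⟨_, 1 / (t * (t - 1)), -(t * c ^ (t - 1)) / (t * (t - 1)),
        (t * c ^ (t - 1) * c - c ^ t) / (t * (t - 1)), hmom t, hpos.mono fun ω hω => ?_, ?_⟩
      · rw [rpowRemainder_of_ne hc hω ht0 ht1]
        field_simp
        ring
      · rw [momentLambda, if_neg ht0, if_neg ht1]
        field_simp
        ring
  refine ⟨(((hφ.const_mul a).add (hX.const_mul b)).add (integrable_const d)).congr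
    (hrepr.mono fun _ h => h.symm), ?_⟩
  rw [integral_congr_ae hrepr, integral_mul_add_mul_add_const hφ hX, hval]

theorem sq_momentLambda_midpoint_le (hpos : ∀ᵐ ω ∂μ, 0 < X ω)
    (hmom : ∀ s : ℝ, Integrable (fun ω => X ω ^ s) μ)
    (hlog : Integrable (fun ω => Real.log (X ω)) μ)
    (hxlog : Integrable (fun ω => X ω * Real.log (X ω)) μ) (a b : ℝ) :
    momentLambda μ X ((a + b) / 2) ^ 2 ≤ momentLambda μ X a * momentLambda μ X b := by
  have hc : 0 < ∫ ω, X ω ∂μ := integral_pos_of_ae_pos_s11 (by simpa using hmom 1) hpos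
  have hnonneg (t : ℝ) : 0 ≤ᵐ[μ] fun ω => rpowRemainder (∫ ω, X ω ∂μ) (X ω) t :=
    hpos.mono fun ω hω => rpowRemainder_nonneg hc hω t
  obtain ⟨ia, ea⟩ := momentLambda_eq_integral_rpowRemainder hpos hmom hlog hxlog a
  obtain ⟨ib, eb⟩ := momentLambda_eq_integral_rpowRemainder hpos hmom hlog hxlog b
  obtain ⟨im, em⟩ := momentLambda_eq_integral_rpowRemainder hpos hmom hlog hxlog ((a + b) / 2)
  rw [ea, eb, em]
  exact sq_integral_le_integral_mul_integral ia ib im (hnonneg a) (hnonneg b)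
    (hpos.mono fun ω hω => sq_rpowRemainder_midpoint_le hc hω a b)

end Moments

noncomputable def momentGram {Ω : Type*} [MeasurableSpace Ω] (μ : Measure Ω) (X : Ω → ℝ)
    (p : Fin 3 → ℝ) : Matrix (Fin 3) (Fin 3) ℝ :=
  Matrix.of fun i j => momentLambda μ X ((p i + p j) / 2)

section Algebra

variable {Ω : Type*} [MeasurableSpace Ω] (μ : Measure Ω) (X : Ω → ℝ) (r s v : ℝ)

theorem momentPhi_eq_mul_det_left :
    momentPhi μ X r s r v = momentLambda μ X r * (momentGram μ X ![r, s, v]).det := by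
  simp only [momentPhi, momentXi, momentGram, Matrix.det_fin_three, Matrix.of_apply,
    Matrix.cons_val_zero, Matrix.cons_val_one, Matrix.cons_val, add_self_div_two]
  ring_nf

theorem momentPhi_eq_mul_det_right :
    momentPhi μ X r v s v = momentLambda μ X v * (momentGram μ X ![r, s, v]).det := by
  simp only [momentPhi, momentXi, momentGram, Matrix.det_fin_three, Matrix.of_apply,
    Matrix.cons_val_zero, Matrix.cons_val_one, Matrix.cons_val, add_self_div_two]
  ring_nf

theorem momentXi_combination_eq_mul_det :
    momentXi μ X r v * (momentXi μ X s ((r + v) / 2) - momentXi μ X ((r + s) / 2) ((s + v) / 2)) +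
        (momentXi μ X r ((s + v) / 2) - momentXi μ X ((r + s) / 2) ((r + v) / 2)) *
          (momentXi μ X v ((r + s) / 2) - momentXi μ X ((r + v) / 2) ((s + v) / 2)) =
      momentLambda μ X ((r + v) / 2) * (momentGram μ X ![r, s, v]).det := by
  simp only [momentXi, momentGram, Matrix.det_fin_three, Matrix.of_apply,
    Matrix.cons_val_zero, Matrix.cons_val_one, Matrix.cons_val, add_self_div_two]
  ring_nf

end Algebra

theorem theorem4_general {Ω : Type*} [MeasurableSpace Ω] (μ : Measure Ω) [IsProbabilityMeasure μ]
    (X : Ω → ℝ) (hpos : ∀ᵐ ω ∂μ, 0 < X ω)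
    (hmom : ∀ s : ℝ, Integrable (fun ω => X ω ^ s) μ)
    (hlog : Integrable (fun ω => Real.log (X ω)) μ)
    (hxlog : Integrable (fun ω => X ω * Real.log (X ω)) μ)
    (r s v : ℝ) :
    momentPhi μ X r s r v * momentPhi μ X r v s v ≥
      (momentXi μ X (r) (v) * (momentXi μ X (s) ((r + v) / 2) - momentXi μ X ((r + s) / 2) ((s + v) / 2)) +
        (momentXi μ X (r) ((s + v) / 2) - momentXi μ X ((r + s) / 2) ((r + v) / 2)) *
          (momentXi μ X (v) ((r + s) / 2) - momentXi μ X ((r + v) / 2) ((s + v) / 2))) ^ 2 := by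
  rw [ge_iff_le, momentPhi_eq_mul_det_left, momentPhi_eq_mul_det_right,
    momentXi_combination_eq_mul_det, mul_pow, mul_mul_mul_comm, ← sq]
  exact mul_le_mul_of_nonneg_right (sq_momentLambda_midpoint_le hpos hmom hlog hxlog r v)
    (sq_nonneg _)

theorem theorem4 {Ω : Type*} [MeasurableSpace Ω] (μ : Measure Ω) [IsProbabilityMeasure μ]
    (X : Ω → ℝ) (hX : Measurable X) (hpos : ∀ᵐ ω ∂μ, 0 < X ω)
    (hmom : ∀ s : ℝ, Integrable (fun ω => X ω ^ s) μ)
    (hlog : Integrable (fun ω => Real.log (X ω)) μ)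
    (hxlog : Integrable (fun ω => X ω * Real.log (X ω)) μ)
    (r s v : ℝ) :
    momentPhi μ X r s r v * momentPhi μ X r v s v ≥
      (momentXi μ X (r) (v) * (momentXi μ X (s) ((r + v) / 2) - momentXi μ X ((r + s) / 2) ((s + v) / 2)) +
        (momentXi μ X (r) ((s + v) / 2) - momentXi μ X ((r + s) / 2) ((r + v) / 2)) *
          (momentXi μ X (v) ((r + s) / 2) - momentXi μ X ((r + v) / 2) ((s + v) / 2))) ^ 2 :=
  theorem4_general μ X hpos hmom hlog hxlog r s v
end

section
/- (Theorem 6) The relative divergence of type s is logarithmically convex in s: for all real numbers s and t, K_s(p‖q) · K_t(p‖q) ≥ (K_{(s+t)/2}(p‖q))². -/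
/-- The relative divergence of type `s`, `K_s(p‖q)`. -/
noncomputable def relDiv {ι : Type*} (p q : ι → ℝ) (s : ℝ) : ℝ :=
  if s = 0 then ∑' i, q i * Real.log (q i / p i)
  else if s = 1 then ∑' i, p i * Real.log (p i / q i)
  else ((∑' i, p i ^ s * q i ^ (1 - s)) - 1) / (s * (s - 1))

/-!
Put `L i = log (p i / q i)`. Then `K_s = ∑ q i φ_s(L i)` with
`φ_s(L) = (e^{sL} - 1 - s(e^L - 1)) / (s(s-1)) = ∫₀¹ L (e^{L(1-x)} - 1) e^{sLx} dx`,
and the integrand is nonnegative. Substituting `y = L x`, `K_s = ∫ e^{sy} dν(y)` is the Laplace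
transform of a positive measure `ν` on `ℝ`, and such Laplace transforms are log-convex by the
Cauchy–Schwarz inequality.
-/

open MeasureTheory Real

theorem lintegral_exp_mul_le_rpow_mul_rpow (μ : Measure ℝ) {a b : ℝ} (ha : 0 ≤ a) (hb : 0 ≤ b)
    (hab : a + b = 1) (s t : ℝ) :
    ∫⁻ y, ENNReal.ofReal (exp ((a * s + b * t) * y)) ∂μ ≤
      (∫⁻ y, ENNReal.ofReal (exp (s * y)) ∂μ) ^ a *
        (∫⁻ y, ENNReal.ofReal (exp (t * y)) ∂μ) ^ b := by
  have hsplit : ∀ y, ENNReal.ofReal (exp ((a * s + b * t) * y))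
      = ENNReal.ofReal (exp (s * y)) ^ a * ENNReal.ofReal (exp (t * y)) ^ b := fun y => by
    rw [ENNReal.ofReal_rpow_of_nonneg (exp_pos _).le ha,
      ENNReal.ofReal_rpow_of_nonneg (exp_pos _).le hb, ← ENNReal.ofReal_mul (by positivity),
      ← exp_mul, ← exp_mul, ← exp_add]
    ring_nf
  simp_rw [hsplit]
  exact ENNReal.lintegral_mul_norm_pow_le (by fun_prop) (by fun_prop) ha hb hab

theorem sq_lintegral_exp_midpoint_le (μ : Measure ℝ) (s t : ℝ) :
    (∫⁻ y, ENNReal.ofReal (exp ((s + t) / 2 * y)) ∂μ) ^ 2 ≤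
      (∫⁻ y, ENNReal.ofReal (exp (s * y)) ∂μ) * ∫⁻ y, ENNReal.ofReal (exp (t * y)) ∂μ := by
  have h := lintegral_exp_mul_le_rpow_mul_rpow μ (a := 1 / 2) (b := 1 / 2)
    (by norm_num) (by norm_num) (by norm_num) s t
  rw [show 1 / 2 * s + 1 / 2 * t = (s + t) / 2 by ring] at h
  calc _ ≤ (_ ^ (1 / 2 : ℝ) * _ ^ (1 / 2 : ℝ)) ^ 2 := pow_le_pow_left₀ zero_le h 2
    _ = _ := by
      rw [mul_pow, ← ENNReal.rpow_mul_natCast, ← ENNReal.rpow_mul_natCast]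
      norm_num

theorem mul_integral_exp_mul (c : ℝ) : c * ∫ x in (0 : ℝ)..1, exp (c * x) = exp c - 1 := by
  rcases eq_or_ne c 0 with rfl | hc
  · simp
  rw [intervalIntegral.integral_comp_mul_left (fun x => exp x) hc, integral_exp, smul_eq_mul,
    mul_inv_cancel_left₀ hc]
  simp

theorem mul_exp_mul_sub_one_nonneg (L : ℝ) {c : ℝ} (hc : 0 ≤ c) : 0 ≤ L * (exp (L * c) - 1) := by
  rcases le_total 0 L with hL | hL
  · exact mul_nonneg hL (sub_nonneg.2 (one_le_exp (mul_nonneg hL hc)))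
  · exact mul_nonneg_of_nonpos_of_nonpos hL
      (sub_nonpos.2 (exp_le_one_iff.2 (mul_nonpos_of_nonpos_of_nonneg hL hc)))

/-- `φ_s(L)`, with `K_s(p‖q) = ∑ q i φ_s(log (p i / q i))`. -/
noncomputable def relDivGen (s L : ℝ) : ℝ :=
  ∫ x in (0 : ℝ)..1, L * (exp (L * (1 - x)) - 1) * exp (s * L * x)

theorem relDivGen_nonneg (s L : ℝ) : 0 ≤ relDivGen s L :=
  intervalIntegral.integral_nonneg zero_le_one fun _ hx =>
    mul_nonneg (mul_exp_mul_sub_one_nonneg L (sub_nonneg.2 hx.2)) (exp_pos _).le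

theorem relDivGen_eq_sub (s L : ℝ) : relDivGen s L =
    exp L * (L * ∫ x in (0 : ℝ)..1, exp ((s - 1) * L * x)) -
      L * ∫ x in (0 : ℝ)..1, exp (s * L * x) := by
  rw [← intervalIntegral.integral_const_mul, ← intervalIntegral.integral_const_mul,
    ← intervalIntegral.integral_const_mul, ← intervalIntegral.integral_sub
      (by apply Continuous.intervalIntegrable; fun_prop)
      (by apply Continuous.intervalIntegrable; fun_prop)]
  refine intervalIntegral.integral_congr fun x _ => ?_
  have : exp (L * (1 - x)) * exp (s * L * x) = exp L * exp ((s - 1) * L * x) := by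
    rw [← exp_add, ← exp_add]; ring_nf
  linear_combination L * this

theorem mul_sub_one_mul_relDivGen (s L : ℝ) :
    s * (s - 1) * relDivGen s L = exp (s * L) - 1 - s * (exp L - 1) := by
  have h1 := mul_integral_exp_mul ((s - 1) * L)
  have h2 := mul_integral_exp_mul (s * L)
  have h3 : exp L * exp ((s - 1) * L) = exp (s * L) := by rw [← exp_add]; ring_nf
  rw [relDivGen_eq_sub]
  linear_combination s * exp L * h1 - (s - 1) * h2 + s * h3

theorem relDivGen_zero (L : ℝ) : relDivGen 0 L = exp L - 1 - L := by
  have h1 := mul_integral_exp_mul ((0 - 1) * L)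
  have h3 : exp L * exp ((0 - 1) * L) = 1 := by rw [← exp_add]; ring_nf; exact exp_zero
  rw [relDivGen_eq_sub]
  simp only [zero_mul, exp_zero, intervalIntegral.integral_const, sub_zero, smul_eq_mul, mul_one]
  linear_combination -exp L * h1 - h3

theorem relDivGen_one (L : ℝ) : relDivGen 1 L = L * exp L - exp L + 1 := by
  have h2 := mul_integral_exp_mul L
  rw [relDivGen_eq_sub]
  simp only [sub_self, zero_mul, exp_zero, intervalIntegral.integral_const, sub_zero, smul_eq_mul,
    mul_one, one_mul]
  linear_combination -h2

/-- The measure with density `|e^{L-y} - 1|` between `0` and `L`, written as a pushforward from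
`[0, 1]` to avoid a case split on the sign of `L`. -/
noncomputable def relDivMeasure (L : ℝ) : Measure ℝ :=
  ((volume.restrict (Set.Icc (0 : ℝ) 1)).withDensity
    fun x => ENNReal.ofReal (L * (exp (L * (1 - x)) - 1))).map (L * ·)

theorem lintegral_exp_relDivMeasure (s L : ℝ) :
    ∫⁻ y, ENNReal.ofReal (exp (s * y)) ∂relDivMeasure L = ENNReal.ofReal (relDivGen s L) := by
  have hweight : ∀ x ∈ Set.Icc (0 : ℝ) 1, 0 ≤ L * (exp (L * (1 - x)) - 1) := fun x hx =>
    mul_exp_mul_sub_one_nonneg L (sub_nonneg.2 hx.2)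
  rw [relDivMeasure, lintegral_map (by fun_prop) (by fun_prop),
    lintegral_withDensity_eq_lintegral_mul _ (by fun_prop) (by fun_prop), relDivGen,
    intervalIntegral.integral_of_le zero_le_one, ← integral_Icc_eq_integral_Ioc,
    ofReal_integral_eq_lintegral_ofReal]
  · refine setLIntegral_congr_fun measurableSet_Icc fun x hx => ?_
    rw [Pi.mul_apply, ← ENNReal.ofReal_mul (hweight x hx), mul_assoc s]
  · exact (Continuous.continuousOn (by fun_prop)).integrableOn_Icc
  · filter_upwards [ae_restrict_mem measurableSet_Icc] with x hx
    exact mul_nonneg (hweight x hx) (exp_pos _).le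

theorem lintegral_exp_sum_relDivMeasure {ι : Type*} {w L : ι → ℝ} (hw : ∀ i, 0 ≤ w i) {s K : ℝ}
    (hK : HasSum (fun i => w i * relDivGen s (L i)) K) :
    ∫⁻ y, ENNReal.ofReal (exp (s * y))
        ∂Measure.sum (fun i => ENNReal.ofReal (w i) • relDivMeasure (L i)) = ENNReal.ofReal K := by
  simp_rw [lintegral_sum_measure, lintegral_smul_measure, lintegral_exp_relDivMeasure, smul_eq_mul,
    ← ENNReal.ofReal_mul (hw _)]
  rw [← hK.tsum_eq, ENNReal.ofReal_tsum_of_nonneg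
    (fun i => mul_nonneg (hw i) (relDivGen_nonneg _ _)) hK.summable]

theorem mul_relDivGen_zero_log_div {a b : ℝ} (ha : 0 < a) (hb : 0 < b) :
    b * relDivGen 0 (log (a / b)) = a - b + b * log (b / a) := by
  rw [relDivGen_zero, exp_log (div_pos ha hb), ← inv_div, log_inv]
  field_simp
  ring

theorem mul_relDivGen_one_log_div {a b : ℝ} (ha : 0 < a) (hb : 0 < b) :
    b * relDivGen 1 (log (a / b)) = a * log (a / b) - a + b := by
  rw [relDivGen_one, exp_log (div_pos ha hb)]
  field_simp

theorem mul_relDivGen_log_div {a b s : ℝ} (ha : 0 < a) (hb : 0 < b) (hs0 : s ≠ 0) (hs1 : s ≠ 1) :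
    b * relDivGen s (log (a / b)) = (a ^ s * b ^ (1 - s) - b - s * (a - b)) / (s * (s - 1)) := by
  have hss : s * (s - 1) ≠ 0 := mul_ne_zero hs0 (sub_ne_zero.2 hs1)
  have h := mul_sub_one_mul_relDivGen s (log (a / b))
  rw [mul_comm s (log _), ← rpow_def_of_pos (div_pos ha hb), exp_log (div_pos ha hb),
    div_rpow ha.le hb.le] at h
  rw [eq_div_iff hss, rpow_sub hb, rpow_one]
  calc b * relDivGen s (log (a / b)) * (s * (s - 1))
      = b * (s * (s - 1) * relDivGen s (log (a / b))) := by ring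
    _ = _ := by rw [h]; field_simp

theorem hasSum_relDivGen {ι : Type*} {p q : ι → ℝ} (hp : ∀ i, 0 < p i) (hq : ∀ i, 0 < q i)
    (hp1 : ∑' i, p i = 1) (hq1 : ∑' i, q i = 1)
    (hmom : ∀ s : ℝ, Summable (fun i => p i ^ s * q i ^ (1 - s)))
    (hpq : Summable (fun i => p i * log (p i / q i)))
    (hqp : Summable (fun i => q i * log (q i / p i))) (s : ℝ) :
    HasSum (fun i => q i * relDivGen s (log (p i / q i))) (relDiv p q s) := by
  have hP : HasSum p 1 := hp1 ▸ (by simpa using hmom 1 : Summable p).hasSum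
  have hQ : HasSum q 1 := hq1 ▸ (by simpa using hmom 0 : Summable q).hasSum
  rcases eq_or_ne s 0 with rfl | hs0
  · simpa [relDiv] using ((hP.sub hQ).add hqp.hasSum).congr_fun
      fun i => mul_relDivGen_zero_log_div (hp i) (hq i)
  rcases eq_or_ne s 1 with rfl | hs1
  · simpa [relDiv] using ((hpq.hasSum.sub hP).add hQ).congr_fun
      fun i => mul_relDivGen_one_log_div (hp i) (hq i)
  simpa [relDiv, hs0, hs1] using
    ((((hmom s).hasSum.sub hQ).sub ((hP.sub hQ).mul_left s)).div_const (s * (s - 1))).congr_fun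
      fun i => mul_relDivGen_log_div (hp i) (hq i) hs0 hs1

theorem theorem6_general {ι : Type*} (p q : ι → ℝ)
    (hp : ∀ i, 0 < p i) (hq : ∀ i, 0 < q i)
    (hp1 : ∑' i, p i = 1) (hq1 : ∑' i, q i = 1)
    (hmom : ∀ s : ℝ, Summable (fun i => p i ^ s * q i ^ (1 - s)))
    (hpq : Summable (fun i => p i * Real.log (p i / q i)))
    (hqp : Summable (fun i => q i * Real.log (q i / p i)))
    (s t : ℝ) :
    relDiv p q s * relDiv p q t ≥ (relDiv p q ((s + t) / 2)) ^ 2 := by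
  have hK := hasSum_relDivGen hp hq hp1 hq1 hmom hpq hqp
  have hK_nonneg (w : ℝ) : 0 ≤ relDiv p q w :=
    (hK w).nonneg fun i => mul_nonneg (hq i).le (relDivGen_nonneg _ _)
  have h := sq_lintegral_exp_midpoint_le
    (Measure.sum fun i => ENNReal.ofReal (q i) • relDivMeasure (log (p i / q i))) s t
  simp only [lintegral_exp_sum_relDivMeasure (fun i => (hq i).le) (hK _)] at h
  rwa [← ENNReal.ofReal_pow (hK_nonneg _), ← ENNReal.ofReal_mul (hK_nonneg s),
    ENNReal.ofReal_le_ofReal_iff (mul_nonneg (hK_nonneg s) (hK_nonneg t))] at h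

theorem theorem6 {ι : Type*} [Countable ι] (p q : ι → ℝ)
    (hp : ∀ i, 0 < p i) (hq : ∀ i, 0 < q i)
    (hp1 : ∑' i, p i = 1) (hq1 : ∑' i, q i = 1)
    (hmom : ∀ s : ℝ, Summable (fun i => p i ^ s * q i ^ (1 - s)))
    (hpq : Summable (fun i => p i * Real.log (p i / q i)))
    (hqp : Summable (fun i => q i * Real.log (q i / p i)))
    (s t : ℝ) :
    relDiv p q s * relDiv p q t ≥ (relDiv p q ((s + t) / 2)) ^ 2 :=
  theorem6_general p q hp hq hp1 hq1 hmom hpq hqp s t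
end
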